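/- For every integer k ≥ 1, the sequence a_n = f_{2^k,n}(-1) satisfies Δ^{2^k} a_n = -a_n for all n ≥ 0. -/

import Mathlib

/-!
The `r`-th forward difference of the binomial transform `m ↦ ∑ⱼ C(m,j) b j` is the binomial
transform of the shifted sequence `j ↦ b (j + r)`. For `b j = (-1) ^ C(j, 2^k)`, Lucas's theorem
gives `C(j, 2^k) ≡ ⌊j / 2^k⌋ (mod 2)`, so shifting `j` by `2^k` flips the sign of `b j`.
-/

open Finset fwdDiff

theorem Nat.choose_prime_pow_modEq_div {p : ℕ} [Fact p.Prime] (n k : ℕ) :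
    n.choose (p ^ k) ≡ n / p ^ k [MOD p] := by
  induction k generalizing n with
  | zero => simp [Nat.ModEq.refl]
  | succ k ih =>
    calc n.choose (p ^ (k + 1))
        ≡ (n % p).choose (p ^ (k + 1) % p) * (n / p).choose (p ^ (k + 1) / p) [MOD p] :=
          Choose.choose_modEq_choose_mod_mul_choose_div_nat
      _ = (n / p).choose (p ^ k) := by
          simp [pow_succ, Nat.mul_mod_left, Nat.mul_div_cancel _ (Fact.out : p.Prime).pos]
      _ ≡ n / p / p ^ k [MOD p] := ih _
      _ = n / p ^ (k + 1) := by rw [Nat.div_div_eq_div_mul, pow_succ']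

theorem neg_one_pow_choose_add_two_pow (j k : ℕ) :
    (-1 : ℤ) ^ ((j + 2 ^ k).choose (2 ^ k)) = -(-1) ^ (j.choose (2 ^ k)) := by
  have := Fact.mk Nat.prime_two
  rw [neg_one_pow_eq_pow_mod_two, Nat.choose_prime_pow_modEq_div,
    Nat.add_div_right _ (by positivity), neg_one_pow_eq_pow_mod_two (n := j.choose _),
    Nat.choose_prime_pow_modEq_div]
  rcases Nat.mod_two_eq_zero_or_one (j / 2 ^ k) with h | h <;> simp [Nat.add_mod, h]

variable {R : Type*} [Ring R]

def binomialTransform (b : ℕ → R) (m : ℕ) : R :=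
  ∑ j ∈ range (m + 1), (m.choose j : R) * b j

theorem fwdDiff_binomialTransform (b : ℕ → R) :
    Δ_[1] (binomialTransform b) = binomialTransform (fun j ↦ b (j + 1)) := by
  ext m
  have pascal : binomialTransform b (m + 1) = ∑ j ∈ range (m + 1), (m.choose j : R) * b (j + 1)
      + ∑ j ∈ range (m + 1), (m.choose (j + 1) : R) * b (j + 1) + b 0 := by
    simp [binomialTransform, sum_range_succ' _ (m + 1), Nat.choose_succ_succ, add_mul,
      sum_add_distrib]
  have low : binomialTransform b m = ∑ j ∈ range (m + 1), (m.choose (j + 1) : R) * b (j + 1)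
      + b 0 := by
    rw [binomialTransform, sum_range_succ', sum_range_succ _ m]
    simp
  rw [fwdDiff, pascal, low, binomialTransform]
  abel

theorem fwdDiff_iter_binomialTransform (b : ℕ → R) (r : ℕ) :
    (Δ_[1])^[r] (binomialTransform b) = binomialTransform (fun j ↦ b (j + r)) := by
  induction r with
  | zero => rfl
  | succ r ih =>
    rw [Function.iterate_succ_apply', ih, fwdDiff_binomialTransform]
    simp only [add_right_comm _ 1, add_assoc]

theorem sum_range_neg_one_pow_choose_mul_sub_eq_fwdDiff_iter (f : ℕ → R) (r n : ℕ) :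
    ∑ ν ∈ range (r + 1), (-1 : R) ^ ν * (r.choose ν : R) * f (n + r - ν) = (Δ_[1])^[r] f n := by
  rw [fwdDiff_iter_eq_sum_shift, ← sum_range_reflect]
  refine sum_congr rfl fun ν hmem ↦ ?_
  have hν : ν ≤ r := Nat.lt_succ_iff.mp (mem_range.mp hmem)
  rw [Nat.add_sub_cancel, Nat.choose_symm hν, show n + r - (r - ν) = n + ν by omega, zsmul_eq_mul]
  simp

theorem stmt_9_general (k : ℕ) (n : ℕ) :
    (∑ ν ∈ Finset.range (2 ^ k + 1), (-1 : ℤ) ^ ν * ((2 ^ k).choose ν : ℤ) *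
        (∑ j ∈ Finset.range (n + 2 ^ k - ν + 1),
          ((n + 2 ^ k - ν).choose j : ℤ) * (-1 : ℤ) ^ (j.choose (2 ^ k))))
      = -(∑ j ∈ Finset.range (n + 1), (n.choose j : ℤ) * (-1 : ℤ) ^ (j.choose (2 ^ k))) := by
  refine (sum_range_neg_one_pow_choose_mul_sub_eq_fwdDiff_iter
    (binomialTransform fun j ↦ (-1 : ℤ) ^ (j.choose (2 ^ k))) _ _).trans ?_
  rw [fwdDiff_iter_binomialTransform, binomialTransform, ← sum_neg_distrib]
  simp only [neg_one_pow_choose_add_two_pow, mul_neg]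

theorem stmt_9 (k : ℕ) (hk : 1 ≤ k) (n : ℕ) :
    (∑ ν ∈ Finset.range (2 ^ k + 1), (-1 : ℤ) ^ ν * ((2 ^ k).choose ν : ℤ) *
        (∑ j ∈ Finset.range (n + 2 ^ k - ν + 1),
          ((n + 2 ^ k - ν).choose j : ℤ) * (-1 : ℤ) ^ (j.choose (2 ^ k))))
      = -(∑ j ∈ Finset.range (n + 1), (n.choose j : ℤ) * (-1 : ℤ) ^ (j.choose (2 ^ k))) :=
  stmt_9_general k n
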